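/- arXiv:1108.3207 — 3 statements merged into one kernel-verified Lean document; each statement's English description precedes it below -/
import Mathlib

section
/- Let $n$ be a positive integer, let $p \in (0,1)$, and let $r$ be a positive integer with $r \le n/2$. Then over all families $\mathcal{A} \subseteq \mathcal{P}[n]$ with $|\mathcal{A}| = \sum_{j=r}^n \binom{n}{j}$, the probability that $\mathcal{A}_p$ is intersecting is maximized by $\mathcal{A} = [n]^{(\geq r)}$. Concretely: for every such $\mathcal{A}$, $\sum_{\mathcal{B} \subseteq \mathcal{A},\ \mathcal{B} \text{ intersecting}} p^{|\mathcal{B}|}(1-p)^{|\mathcal{A}|-|\mathcal{B}|} \le \sum_{\mathcal{B} \subseteq [n]^{(\geq r)},\ \mathcal{B} \text{ intersecting}} p^{|\mathcal{B}|}(1-p)^{|[n]^{(\geq r)}|-|\mathcal{B}|}$. -/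
open Finset

/-- A family of finite sets is intersecting if any two members meet. -/
def IsIntersecting (𝓑 : Finset (Finset ℕ)) : Prop :=
  ∀ A ∈ 𝓑, ∀ B ∈ 𝓑, (A ∩ B).Nonempty

instance : DecidablePred IsIntersecting :=
  fun 𝓑 => decidable_of_iff (∀ A ∈ 𝓑, ∀ B ∈ 𝓑, (A ∩ B).Nonempty) Iff.rfl

/-- A family is `t`-intersecting if any two members meet in at least `t` elements. -/
def TIntersecting (t : ℕ) (𝓐 : Finset (Finset ℕ)) : Prop :=
  ∀ A ∈ 𝓐, ∀ B ∈ 𝓐, t ≤ (A ∩ B).card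

/-- The probability that the p-random subfamily of `𝓐` is intersecting. -/
noncomputable def probInter (p : ℝ) (𝓐 : Finset (Finset ℕ)) : ℝ :=
  ∑ 𝓑 ∈ 𝓐.powerset.filter IsIntersecting,
    p ^ 𝓑.card * (1 - p) ^ (𝓐.card - 𝓑.card)

/-- The number of intersecting subfamilies of `𝓐` of order `m`. -/
def numInter (𝓐 : Finset (Finset ℕ)) (m : ℕ) : ℕ :=
  ((𝓐.powerset.filter IsIntersecting).filter (fun 𝓑 => 𝓑.card = m)).card

/-- `[n]^{(≥ r)}`: all subsets of `[n] = {1,…,n}` of size at least `r`. -/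
def atLeast (n r : ℕ) : Finset (Finset ℕ) :=
  (Finset.Icc 1 n).powerset.filter (fun A => r ≤ A.card)

/-- `[n]^{(r)}`: all subsets of `[n] = {1,…,n}` of size exactly `r`. -/
def uniformFam (n r : ℕ) : Finset (Finset ℕ) :=
  Finset.powersetCard r (Finset.Icc 1 n)

/-- The `ij`-compression of a set. -/
def setCompress (i j : ℕ) (A : Finset ℕ) : Finset ℕ :=
  if j ∈ A ∧ i ∉ A then insert i (A.erase j) else A

/-- The `ij`-compression of a family. -/
def famCompress (i j : ℕ) (𝓐 : Finset (Finset ℕ)) : Finset (Finset ℕ) :=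
  𝓐.image (setCompress i j) ∪ 𝓐.filter (fun A => setCompress i j A ∈ 𝓐)

/-- A family is left-compressed if it is `ij`-compressed for all `i < j` in `[n]`. -/
def LeftCompressed (n : ℕ) (𝓐 : Finset (Finset ℕ)) : Prop :=
  ∀ i j : ℕ, 1 ≤ i → i < j → j ≤ n → famCompress i j 𝓐 = 𝓐

/-- The `UV`-compression of a set. -/
def setUV (U V A : Finset ℕ) : Finset ℕ :=
  if V ⊆ A ∧ Disjoint U A then (A ∪ U) \ V else A

/-- The `UV`-compression of a family. -/
def famUV (U V : Finset ℕ) (𝓐 : Finset (Finset ℕ)) : Finset (Finset ℕ) :=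
  𝓐.image (setUV U V) ∪ 𝓐.filter (fun A => setUV U V A ∈ 𝓐)

/-- `f` is a pairing function on `U`: an involution on `U` with no fixed point. -/
def IsPairing (f : ℕ → ℕ) (U : Finset ℕ) : Prop :=
  (∀ x ∈ U, f x ∈ U) ∧ (∀ x ∈ U, f (f x) = x) ∧ (∀ x ∈ U, f x ≠ x)

/-- The `(U,v,f)`-compression of a set. -/
def setUvf (U : Finset ℕ) (v : ℕ) (f : ℕ → ℕ) (A : Finset ℕ) : Finset ℕ :=
  if v ∈ A then A else (A ∩ U).image f ∪ {v} ∪ (A \ U)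

/-- The `(U,v,f)`-compression of a family. -/
def famUvf (U : Finset ℕ) (v : ℕ) (f : ℕ → ℕ) (𝓐 : Finset (Finset ℕ)) : Finset (Finset ℕ) :=
  𝓐.image (setUvf U v f) ∪ 𝓐.filter (fun A => setUvf U v f A ∈ 𝓐)

/-!
A `(U, v, f)`-compression replaces a member `A ∌ v` by `f (A ∩ U) ∪ {v} ∪ (A \ U)` unless that set
is already present; it keeps the size of the family and lifts the moved members by one level. It
does not decrease the probability that the random subfamily is intersecting: compressing a suitable
part of each intersecting subfamily of `𝓐` maps them injectively, and preserving sizes, to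
intersecting subfamilies of the compressed family. Compressing until nothing moves yields a family
which contains a whole level of `𝒫[n]` as soon as it meets the level below; inside `𝒫[n]` and of
size `∑_{j ≥ r} (n choose j)` such a family is `[n]^{(≥ r)}`.
-/

open Relation

namespace IsPairing

variable {f : ℕ → ℕ} {U s : Finset ℕ}

lemma image_subset (hf : IsPairing f U) (hs : s ⊆ U) : s.image f ⊆ U :=
  image_subset_iff.2 fun x hx => hf.1 x (hs hx)

lemma image_image (hf : IsPairing f U) (hs : s ⊆ U) : (s.image f).image f = s := by
  rw [Finset.image_image, image_congr (f := f ∘ f) (g := id) fun x hx => hf.2.1 x (hs hx),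
    image_id]

lemma injOn (hf : IsPairing f U) : Set.InjOn f U := fun x hx y hy h => by
  rw [← hf.2.1 x hx, h, hf.2.1 y hy]

end IsPairing

section SetUvf

variable {U s : Finset ℕ} {v : ℕ} {f : ℕ → ℕ} {A B Z : Finset ℕ}

lemma setUvf_of_mem (h : v ∈ A) : setUvf U v f A = A := if_pos h

lemma setUvf_of_notMem (h : v ∉ A) :
    setUvf U v f A = (A ∩ U).image f ∪ {v} ∪ (A \ U) := if_neg h

lemma mem_setUvf : v ∈ setUvf U v f A := by
  by_cases h : v ∈ A
  · rwa [setUvf_of_mem h]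
  · simp [setUvf_of_notMem h]

lemma setUvf_setUvf : setUvf U v f (setUvf U v f A) = setUvf U v f A :=
  setUvf_of_mem mem_setUvf

lemma notMem_of_disjoint_setUvf (h : Disjoint (setUvf U v f Z) B) : v ∉ B :=
  disjoint_left.1 h mem_setUvf

lemma setUvf_subset (hf : IsPairing f U) (hU : U ⊆ s) (hvs : v ∈ s) (hA : A ⊆ s) :
    setUvf U v f A ⊆ s := by
  by_cases h : v ∈ A
  · rwa [setUvf_of_mem h]
  · rw [setUvf_of_notMem h]
    exact union_subset (union_subset ((hf.image_subset inter_subset_right).trans hU)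
      (singleton_subset_iff.2 hvs)) (sdiff_subset.trans hA)

lemma image_setUvf_inter_union_sdiff (hv : v ∉ U) (hf : IsPairing f U) (h : v ∉ A) :
    (setUvf U v f A ∩ U).image f ∪ (setUvf U v f A \ insert v U) = A := by
  have hinter : setUvf U v f A ∩ U = (A ∩ U).image f := by
    rw [setUvf_of_notMem h, union_inter_distrib_right, union_inter_distrib_right,
      inter_eq_left.2 (hf.image_subset inter_subset_right), sdiff_inter_self, union_empty,
      singleton_inter_of_notMem hv, union_empty]
  have hsdiff : setUvf U v f A \ insert v U = A \ U := by
    ext x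
    have := hf.image_subset (s := A ∩ U) inter_subset_right (x := x)
    simp only [setUvf_of_notMem h, mem_sdiff, mem_union, mem_insert, mem_singleton]
    grind
  rw [hinter, hsdiff, hf.image_image inter_subset_right, union_comm, sdiff_union_inter]

lemma setUvf_injOn (hv : v ∉ U) (hf : IsPairing f U) :
    Set.InjOn (setUvf U v f) {A | v ∉ A} := fun A hA B hB h => by
  rw [← image_setUvf_inter_union_sdiff hv hf hA, h, image_setUvf_inter_union_sdiff hv hf hB]

lemma card_setUvf (hv : v ∉ U) (hf : IsPairing f U) (h : v ∉ A) :
    #(setUvf U v f A) = #A + 1 := by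
  have hfU := hf.image_subset (s := A ∩ U) inter_subset_right
  rw [setUvf_of_notMem h, card_union_of_disjoint, card_union_of_disjoint,
    card_image_of_injOn (hf.injOn.mono (by simp)), card_singleton,
    ← card_inter_add_card_sdiff A U]
  · omega
  · exact disjoint_singleton_right.2 fun hvU => hv (hfU hvU)
  · refine disjoint_union_left.2 ⟨disjoint_left.2 fun x hx hx' => (mem_sdiff.1 hx').2 (hfU hx),
      disjoint_singleton_left.2 fun hvA => h (mem_sdiff.1 hvA).1⟩

lemma disjoint_setUvf_swap (hf : IsPairing f U) (hZ : v ∉ Z) (hB : v ∉ B)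
    (h : Disjoint (setUvf U v f Z) B) : Disjoint Z (setUvf U v f B) := by
  rw [setUvf_of_notMem hZ] at h
  rw [setUvf_of_notMem hB, disjoint_left]
  intro x hxZ hx
  simp only [mem_union, mem_image, mem_inter, mem_singleton, mem_sdiff] at hx
  rcases hx with (⟨u, ⟨huB, huU⟩, rfl⟩ | rfl) | ⟨hxB, hxU⟩
  · exact disjoint_left.1 h (mem_union_left _ (mem_union_left _
      (mem_image.2 ⟨f u, mem_inter.2 ⟨hxZ, hf.1 u huU⟩, hf.2.1 u huU⟩))) huB
  · exact hZ hxZ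
  · exact disjoint_left.1 h (mem_union_right _ (mem_sdiff.2 ⟨hxZ, hxU⟩)) hxB

end SetUvf

section FamUvf

variable {U s : Finset ℕ} {v : ℕ} {f : ℕ → ℕ} {𝓐 : Finset (Finset ℕ)}

lemma famUvf_eq : famUvf U v f 𝓐 =
    {A ∈ 𝓐 | setUvf U v f A ∉ 𝓐}.image (setUvf U v f) ∪ {A ∈ 𝓐 | setUvf U v f A ∈ 𝓐} := by
  ext X
  simp only [famUvf, mem_union, mem_image, mem_filter]
  constructor
  · rintro (⟨A, hA, rfl⟩ | hX)
    · by_cases hmem : setUvf U v f A ∈ 𝓐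
      · exact Or.inr ⟨hmem, by rwa [setUvf_setUvf]⟩
      · exact Or.inl ⟨A, ⟨hA, hmem⟩, rfl⟩
    · exact Or.inr hX
  · rintro (⟨A, hA, rfl⟩ | hX)
    · exact Or.inl ⟨A, hA.1, rfl⟩
    · exact Or.inr hX

lemma notMem_of_setUvf_notMem {A : Finset ℕ} (hA : A ∈ 𝓐) (h : setUvf U v f A ∉ 𝓐) : v ∉ A :=
  fun hvA => h (by rwa [setUvf_of_mem hvA])

lemma setUvf_injOn_moved (hv : v ∉ U) (hf : IsPairing f U) :
    Set.InjOn (setUvf U v f) ({A ∈ 𝓐 | setUvf U v f A ∉ 𝓐} : Finset _) := fun _ hA _ hB =>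
  have hA := mem_filter.1 hA
  have hB := mem_filter.1 hB
  setUvf_injOn hv hf (notMem_of_setUvf_notMem hA.1 hA.2) (notMem_of_setUvf_notMem hB.1 hB.2)

lemma disjoint_image_moved_fixed : Disjoint ({A ∈ 𝓐 | setUvf U v f A ∉ 𝓐}.image (setUvf U v f))
    {A ∈ 𝓐 | setUvf U v f A ∈ 𝓐} := by
  rw [disjoint_left]
  rintro X hX hX'
  obtain ⟨A, hA, rfl⟩ := mem_image.1 hX
  exact (mem_filter.1 hA).2 (mem_filter.1 hX').1

lemma card_famUvf (hv : v ∉ U) (hf : IsPairing f U) : #(famUvf U v f 𝓐) = #𝓐 := by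
  rw [famUvf_eq, card_union_of_disjoint disjoint_image_moved_fixed,
    card_image_of_injOn (setUvf_injOn_moved hv hf), add_comm,
    card_filter_add_card_filter_not]

lemma famUvf_subset_powerset (hf : IsPairing f U) (hU : U ⊆ s) (hvs : v ∈ s)
    (h𝓐 : 𝓐 ⊆ s.powerset) : famUvf U v f 𝓐 ⊆ s.powerset := by
  rw [famUvf, union_subset_iff, image_subset_iff]
  exact ⟨fun A hA => mem_powerset.2 (setUvf_subset hf hU hvs (mem_powerset.1 (h𝓐 hA))),
    (filter_subset _ _).trans h𝓐⟩

def missingCount (s : Finset ℕ) (𝓐 : Finset (Finset ℕ)) : ℕ := ∑ A ∈ 𝓐, (#s - #A)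

lemma missingCount_famUvf_lt (hv : v ∉ U) (hf : IsPairing f U) (hU : U ⊆ s) (hvs : v ∈ s)
    (h𝓐 : 𝓐 ⊆ s.powerset) (hmoved : ∃ A ∈ 𝓐, setUvf U v f A ∉ 𝓐) :
    missingCount s (famUvf U v f 𝓐) < missingCount s 𝓐 := by
  obtain ⟨A₀, hA₀, hA₀moved⟩ := hmoved
  have hgrow : ∀ A ∈ {A ∈ 𝓐 | setUvf U v f A ∉ 𝓐}, #s - #(setUvf U v f A) < #s - #A := by
    intro A hA
    obtain ⟨hA𝓐, hAmoved⟩ := mem_filter.1 hA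
    have hsub := card_le_card (setUvf_subset hf hU hvs (mem_powerset.1 (h𝓐 hA𝓐)))
    rw [card_setUvf hv hf (notMem_of_setUvf_notMem hA𝓐 hAmoved)] at hsub ⊢
    omega
  rw [missingCount, missingCount, famUvf_eq, sum_union disjoint_image_moved_fixed,
    sum_image (setUvf_injOn_moved hv hf), ← sum_filter_not_add_sum_filter 𝓐 (setUvf U v f · ∈ 𝓐)]
  exact Nat.add_lt_add_right (sum_lt_sum_of_nonempty ⟨A₀, mem_filter.2 ⟨hA₀, hA₀moved⟩⟩ hgrow) _

end FamUvf

section TransferUvf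

variable (U : Finset ℕ) (v : ℕ) (f : ℕ → ℕ) (𝓐 : Finset (Finset ℕ))

/-! A member of a subfamily `𝓑 ⊆ 𝓐` is *pushed* if it is linked to a member whose compression
leaves `𝓐` by a chain of members, each meeting its predecessor but missing the predecessor's
compression. Compressing exactly the pushed members keeps `𝓑` intersecting, and the pushed part
can be read back from the result, because the admissibility predicate `M` of the chain may be
replaced by "its compression lies in the result". -/

def ConflictStep (M : Finset ℕ → Prop) (Z B : Finset ℕ) : Prop :=
  M B ∧ (Z ∩ B).Nonempty ∧ Disjoint (setUvf U v f Z) B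

def Pushed (M : Finset ℕ → Prop) (B : Finset ℕ) : Prop :=
  ∃ Z, M Z ∧ v ∉ Z ∧ setUvf U v f Z ∉ 𝓐 ∧ ReflTransGen (ConflictStep U v f M) Z B

open Classical in
noncomputable def pushedPart (𝓑 : Finset (Finset ℕ)) : Finset (Finset ℕ) :=
  {B ∈ 𝓑 | Pushed U v f 𝓐 (· ∈ 𝓑) B}

noncomputable def transferUvf (𝓑 : Finset (Finset ℕ)) : Finset (Finset ℕ) :=
  (pushedPart U v f 𝓐 𝓑).image (setUvf U v f) ∪ (𝓑 \ pushedPart U v f 𝓐 𝓑)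

variable {U v f 𝓐} {M : Finset ℕ → Prop} {𝓑 : Finset (Finset ℕ)} {B Z : Finset ℕ}

lemma Pushed.mem (h : Pushed U v f 𝓐 M B) : M B ∧ v ∉ B := by
  obtain ⟨Z, hZ, hvZ, -, hZB⟩ := h
  induction hZB with
  | refl => exact ⟨hZ, hvZ⟩
  | tail _ hstep _ => exact ⟨hstep.1, notMem_of_disjoint_setUvf hstep.2.2⟩

lemma Pushed.tail (h : Pushed U v f 𝓐 M Z) (hstep : ConflictStep U v f M Z B) :
    Pushed U v f 𝓐 M B :=
  let ⟨Z₀, hZ₀, hvZ₀, hZ₀𝓐, hZ₀Z⟩ := h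
  ⟨Z₀, hZ₀, hvZ₀, hZ₀𝓐, hZ₀Z.tail hstep⟩

lemma pushed_of_setUvf_notMem (hB : M B) (hvB : v ∉ B) (hB𝓐 : setUvf U v f B ∉ 𝓐) :
    Pushed U v f 𝓐 M B :=
  ⟨B, hB, hvB, hB𝓐, ReflTransGen.refl⟩

lemma mem_pushedPart : B ∈ pushedPart U v f 𝓐 𝓑 ↔ Pushed U v f 𝓐 (· ∈ 𝓑) B := by
  classical
  simpa [pushedPart] using fun h => h.mem.1

lemma pushedPart_subset : pushedPart U v f 𝓐 𝓑 ⊆ 𝓑 := fun _ hB => (mem_pushedPart.1 hB).mem.1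

lemma setUvf_notMem_of_pushed (hf : IsPairing f U) (h𝓑 : 𝓑 ⊆ 𝓐) (hint : IsIntersecting 𝓑)
    (h : Pushed U v f 𝓐 (· ∈ 𝓑) B) : setUvf U v f B ∉ 𝓑 := by
  obtain ⟨Z, hZ, hvZ, hZ𝓐, hZB⟩ := h
  induction hZB with
  | refl => exact fun hZ𝓑 => hZ𝓐 (h𝓑 hZ𝓑)
  | @tail Y B hZY hstep _ =>
    intro hB𝓑
    obtain ⟨hY, hvY⟩ := (show Pushed U v f 𝓐 (· ∈ 𝓑) Y from ⟨Z, hZ, hvZ, hZ𝓐, hZY⟩).mem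
    exact not_disjoint_iff_nonempty_inter.2 (hint Y hY _ hB𝓑)
      (disjoint_setUvf_swap hf hvY (notMem_of_disjoint_setUvf hstep.2.2) hstep.2.2)

lemma transferUvf_subset_famUvf (h𝓑 : 𝓑 ⊆ 𝓐) : transferUvf U v f 𝓐 𝓑 ⊆ famUvf U v f 𝓐 := by
  rw [transferUvf, union_subset_iff, image_subset_iff]
  refine ⟨fun B hB => ?_, fun X hX => ?_⟩
  · have hB𝓐 := h𝓑 (pushedPart_subset hB)
    by_cases hmem : setUvf U v f B ∈ 𝓐
    · exact mem_union_right _ (mem_filter.2 ⟨hmem, by rwa [setUvf_setUvf]⟩)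
    · exact mem_union_left _ (mem_image_of_mem _ hB𝓐)
  · obtain ⟨hX𝓑, hXpushed⟩ := mem_sdiff.1 hX
    refine mem_union_right _ (mem_filter.2 ⟨h𝓑 hX𝓑, ?_⟩)
    by_contra hmem
    exact hXpushed (mem_pushedPart.2 (pushed_of_setUvf_notMem hX𝓑
      (notMem_of_setUvf_notMem (h𝓑 hX𝓑) hmem) hmem))

lemma disjoint_image_pushedPart (hf : IsPairing f U) (h𝓑 : 𝓑 ⊆ 𝓐) (hint : IsIntersecting 𝓑) :
    Disjoint ((pushedPart U v f 𝓐 𝓑).image (setUvf U v f)) 𝓑 := by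
  rw [disjoint_left]
  rintro X hX hX𝓑
  obtain ⟨B, hB, rfl⟩ := mem_image.1 hX
  exact setUvf_notMem_of_pushed hf h𝓑 hint (mem_pushedPart.1 hB) hX𝓑

lemma card_transferUvf (hv : v ∉ U) (hf : IsPairing f U) (h𝓑 : 𝓑 ⊆ 𝓐)
    (hint : IsIntersecting 𝓑) : #(transferUvf U v f 𝓐 𝓑) = #𝓑 := by
  rw [transferUvf, card_union_of_disjoint
      ((disjoint_image_pushedPart hf h𝓑 hint).mono_right sdiff_subset),
    card_image_of_injOn fun B hB B' hB' =>
      setUvf_injOn hv hf (mem_pushedPart.1 hB).mem.2 (mem_pushedPart.1 hB').mem.2,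
    add_comm, card_sdiff_add_card_eq_card pushedPart_subset]

lemma isIntersecting_transferUvf (hint : IsIntersecting 𝓑) :
    IsIntersecting (transferUvf U v f 𝓐 𝓑) := by
  have hmeets : ∀ X ∈ transferUvf U v f 𝓐 𝓑, ∀ B ∈ pushedPart U v f 𝓐 𝓑,
      (setUvf U v f B ∩ X).Nonempty := by
    intro X hX B hB
    rcases mem_union.1 hX with hX | hX
    · obtain ⟨B', -, rfl⟩ := mem_image.1 hX
      exact ⟨v, mem_inter.2 ⟨mem_setUvf, mem_setUvf⟩⟩
    · obtain ⟨hX𝓑, hXpushed⟩ := mem_sdiff.1 hX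
      rw [← not_disjoint_iff_nonempty_inter]
      intro hdisj
      have hB := mem_pushedPart.1 hB
      exact hXpushed (mem_pushedPart.2 (hB.tail ⟨hX𝓑, hint B hB.mem.1 X hX𝓑, hdisj⟩))
  intro X hX Y hY
  rcases mem_union.1 hX with hX' | hX'
  · obtain ⟨B, hB, rfl⟩ := mem_image.1 hX'
    exact hmeets Y hY B hB
  · rcases mem_union.1 hY with hY' | hY'
    · obtain ⟨B, hB, rfl⟩ := mem_image.1 hY'
      rw [inter_comm]
      exact hmeets X hX B hB
    · exact hint X (mem_sdiff.1 hX').1 Y (mem_sdiff.1 hY').1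

lemma pushed_transferUvf_iff (hv : v ∉ U) (hf : IsPairing f U) (h𝓑 : 𝓑 ⊆ 𝓐)
    (hint : IsIntersecting 𝓑) :
    Pushed U v f 𝓐 (setUvf U v f · ∈ transferUvf U v f 𝓐 𝓑) B ↔
      Pushed U v f 𝓐 (· ∈ 𝓑) B := by
  have hback : ∀ {B}, v ∉ B → setUvf U v f B ∈ transferUvf U v f 𝓐 𝓑 →
      setUvf U v f B ∉ 𝓑 → Pushed U v f 𝓐 (· ∈ 𝓑) B := by
    intro B hvB hB hB𝓑
    rcases mem_union.1 hB with hB | hB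
    · obtain ⟨B', hB', hBB'⟩ := mem_image.1 hB
      have hB' := mem_pushedPart.1 hB'
      rwa [← setUvf_injOn hv hf hB'.mem.2 hvB hBB']
    · exact absurd (mem_sdiff.1 hB).1 hB𝓑
  constructor
  · rintro ⟨Z, hZ, hvZ, hZ𝓐, hZB⟩
    induction hZB with
    | refl => exact hback hvZ hZ fun hZ𝓑 => hZ𝓐 (h𝓑 hZ𝓑)
    | @tail Y B _ hstep ih =>
      obtain ⟨hY, hvY⟩ := ih.mem
      have hvB := notMem_of_disjoint_setUvf hstep.2.2
      exact hback hvB hstep.1 fun hB𝓑 => not_disjoint_iff_nonempty_inter.2 (hint Y hY _ hB𝓑)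
        (disjoint_setUvf_swap hf hvY hvB hstep.2.2)
  · rintro ⟨Z, hZ, hvZ, hZ𝓐, hZB⟩
    have himage : ∀ {B}, Pushed U v f 𝓐 (· ∈ 𝓑) B →
        setUvf U v f B ∈ transferUvf U v f 𝓐 𝓑 :=
      fun hB => mem_union_left _ (mem_image_of_mem _ (mem_pushedPart.2 hB))
    induction hZB with
    | refl => exact pushed_of_setUvf_notMem (himage (pushed_of_setUvf_notMem hZ hvZ hZ𝓐)) hvZ hZ𝓐
    | @tail Y B hZY hstep ih =>
      have hB : Pushed U v f 𝓐 (· ∈ 𝓑) B := ⟨Z, hZ, hvZ, hZ𝓐, hZY.tail hstep⟩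
      exact ih.tail ⟨himage hB, hstep.2⟩

open Classical in
lemma pushedPart_eq (hv : v ∉ U) (hf : IsPairing f U) (h𝓑 : 𝓑 ⊆ 𝓐)
    (hint : IsIntersecting 𝓑) : pushedPart U v f 𝓐 𝓑 =
      {B ∈ 𝓐 | Pushed U v f 𝓐 (setUvf U v f · ∈ transferUvf U v f 𝓐 𝓑) B} := by
  ext B
  simp only [mem_pushedPart, mem_filter, pushed_transferUvf_iff hv hf h𝓑 hint]
  exact ⟨fun h => ⟨h𝓑 h.mem.1, h⟩, And.right⟩

lemma transferUvf_sdiff_union (hf : IsPairing f U) (h𝓑 : 𝓑 ⊆ 𝓐) (hint : IsIntersecting 𝓑) :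
    (transferUvf U v f 𝓐 𝓑 \ (pushedPart U v f 𝓐 𝓑).image (setUvf U v f)) ∪
      pushedPart U v f 𝓐 𝓑 = 𝓑 := by
  rw [transferUvf, union_sdiff_left,
    sdiff_eq_self_of_disjoint ((disjoint_image_pushedPart hf h𝓑 hint).mono_right sdiff_subset).symm,
    sdiff_union_of_subset pushedPart_subset]

lemma transferUvf_injOn (hv : v ∉ U) (hf : IsPairing f U) :
    Set.InjOn (transferUvf U v f 𝓐) {𝓑 | 𝓑 ⊆ 𝓐 ∧ IsIntersecting 𝓑} := by
  rintro 𝓑 ⟨h𝓑, hint⟩ 𝓑' ⟨h𝓑', hint'⟩ h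
  have hpushed : pushedPart U v f 𝓐 𝓑 = pushedPart U v f 𝓐 𝓑' := by
    rw [pushedPart_eq hv hf h𝓑 hint, pushedPart_eq hv hf h𝓑' hint', h]
  rw [← transferUvf_sdiff_union hf h𝓑 hint, h, hpushed, transferUvf_sdiff_union hf h𝓑' hint']

end TransferUvf

lemma probInter_le_probInter_famUvf {U : Finset ℕ} {v : ℕ} {f : ℕ → ℕ} (hv : v ∉ U)
    (hf : IsPairing f U) {p : ℝ} (hp0 : 0 ≤ p) (hp1 : p ≤ 1) (𝓐 : Finset (Finset ℕ)) :
    probInter p 𝓐 ≤ probInter p (famUvf U v f 𝓐) := by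
  set w : Finset (Finset ℕ) → ℝ := fun 𝓑 => p ^ #𝓑 * (1 - p) ^ (#𝓐 - #𝓑)
  set 𝓘 := 𝓐.powerset.filter IsIntersecting
  have hmem : ∀ 𝓑 ∈ 𝓘, 𝓑 ⊆ 𝓐 ∧ IsIntersecting 𝓑 := fun 𝓑 h𝓑 => by
    simpa only [𝓘, mem_filter, mem_powerset] using h𝓑
  rw [probInter, probInter, card_famUvf hv hf]
  calc ∑ 𝓑 ∈ 𝓘, w 𝓑 = ∑ 𝓑 ∈ 𝓘, w (transferUvf U v f 𝓐 𝓑) :=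
        sum_congr rfl fun 𝓑 h𝓑 => by
          simp only [w, card_transferUvf hv hf (hmem 𝓑 h𝓑).1 (hmem 𝓑 h𝓑).2]
    _ = ∑ 𝓒 ∈ 𝓘.image (transferUvf U v f 𝓐), w 𝓒 :=
        (sum_image fun 𝓑 h𝓑 𝓑' h𝓑' => transferUvf_injOn hv hf (hmem 𝓑 h𝓑) (hmem 𝓑' h𝓑')).symm
    _ ≤ ∑ 𝓒 ∈ (famUvf U v f 𝓐).powerset.filter IsIntersecting, w 𝓒 :=
        sum_le_sum_of_subset_of_nonneg (image_subset_iff.2 fun 𝓑 h𝓑 =>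
            mem_filter.2 ⟨mem_powerset.2 (transferUvf_subset_famUvf (hmem 𝓑 h𝓑).1),
              isIntersecting_transferUvf (hmem 𝓑 h𝓑).2⟩)
          fun _ _ _ => mul_nonneg (pow_nonneg hp0 _) (pow_nonneg (sub_nonneg.2 hp1) _)

lemma exists_isPairing_image_eq {X Y : Finset ℕ} (hXY : Disjoint X Y) (hcard : #X = #Y) :
    ∃ g : ℕ → ℕ, IsPairing g (X ∪ Y) ∧ X.image g = Y := by
  classical
  let e := equivOfCardEq hcard
  let g : ℕ → ℕ := fun x =>
    if hx : x ∈ X then e ⟨x, hx⟩ else if hy : x ∈ Y then e.symm ⟨x, hy⟩ else x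
  have hgX : ∀ x ∈ X, g x ∈ Y ∧ g (g x) = x := fun x hx => by
    have hgx : g x = e ⟨x, hx⟩ := dif_pos hx
    refine ⟨hgx ▸ (e _).2, ?_⟩
    simp [g, hgx, disjoint_right.1 hXY (e _).2]
  have hgY : ∀ y ∈ Y, g y ∈ X ∧ g (g y) = y := fun y hy => by
    have hgy : g y = e.symm ⟨y, hy⟩ := by simp [g, disjoint_right.1 hXY hy, hy]
    refine ⟨hgy ▸ (e.symm _).2, ?_⟩
    simp [g, hgy]
  refine ⟨g, ⟨fun x hx => ?_, fun x hx => ?_, fun x hx hfix => ?_⟩, ?_⟩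
  · rcases mem_union.1 hx with hx | hx
    exacts [mem_union_right _ (hgX x hx).1, mem_union_left _ (hgY x hx).1]
  · rcases mem_union.1 hx with hx | hx
    exacts [(hgX x hx).2, (hgY x hx).2]
  · rcases mem_union.1 hx with hx | hx
    · exact disjoint_left.1 hXY hx (hfix ▸ (hgX x hx).1)
    · exact disjoint_right.1 hXY hx (hfix ▸ (hgY x hx).1)
  · ext y
    simp only [mem_image]
    exact ⟨fun ⟨x, hx, hxy⟩ => hxy ▸ (hgX x hx).1, fun hy => ⟨g y, (hgY y hy).1, (hgY y hy).2⟩⟩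

/-- The pairing matches `A \ B` with `B \ A` minus one point `v`. -/
lemma exists_setUvf_eq {A B : Finset ℕ} (hcard : #B = #A + 1) :
    ∃ U v g, IsPairing g U ∧ v ∉ U ∧ U ⊆ A ∪ B ∧ v ∈ B ∧ setUvf U v g A = B := by
  have hsdiff : #(B \ A) = #(A \ B) + 1 := by
    have := card_sdiff_add_card_inter A B
    have := card_sdiff_add_card_inter B A
    rw [inter_comm] at this
    omega
  obtain ⟨v, hv⟩ := card_pos.1 (hsdiff ▸ Nat.succ_pos _ : 0 < #(B \ A))
  obtain ⟨hvB, hvA⟩ := mem_sdiff.1 hv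
  obtain ⟨g, hg, himage⟩ := exists_isPairing_image_eq (X := A \ B) (Y := (B \ A).erase v)
    (disjoint_left.2 fun x hx hx' => (mem_sdiff.1 (mem_of_mem_erase hx')).2 (mem_sdiff.1 hx).1)
    (by rw [card_erase_of_mem hv]; omega)
  refine ⟨A \ B ∪ (B \ A).erase v, v, g, hg, by simp [hvA], ?_, hvB, ?_⟩
  · exact union_subset (sdiff_subset.trans subset_union_left)
      ((erase_subset _ _).trans (sdiff_subset.trans subset_union_right))
  · have hinter : A ∩ (A \ B ∪ (B \ A).erase v) = A \ B := by
      ext; simp only [mem_inter, mem_union, mem_sdiff, mem_erase]; tauto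
    have hrest : A \ (A \ B ∪ (B \ A).erase v) = A ∩ B := by
      ext; simp only [mem_inter, mem_union, mem_sdiff, mem_erase]; tauto
    rw [setUvf_of_notMem hvA, hinter, himage, hrest]
    ext x
    simp only [mem_union, mem_erase, mem_sdiff, mem_singleton, mem_inter]
    grind

section LevelClosed

variable {s : Finset ℕ} {𝓑 : Finset (Finset ℕ)} {A : Finset ℕ}

def LevelClosed (s : Finset ℕ) (𝓑 : Finset (Finset ℕ)) : Prop :=
  ∀ A ∈ 𝓑, powersetCard (#A + 1) s ⊆ 𝓑

lemma LevelClosed.powersetCard_subset (h : LevelClosed s 𝓑) (hA : A ∈ 𝓑) {j : ℕ}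
    (hj : #A + 1 ≤ j) : powersetCard j s ⊆ 𝓑 := by
  induction j, hj using Nat.le_induction with
  | base => exact h A hA
  | succ j _ ih =>
    obtain hempty | ⟨B, hB⟩ := (powersetCard j s).eq_empty_or_nonempty
    · rw [powersetCard_eq_empty.2 (Nat.lt_succ_of_lt (powersetCard_eq_empty.1 hempty))]
      exact empty_subset _
    · simpa only [(mem_powersetCard.1 hB).2] using h B (ih hB)

lemma exists_setUvf_notMem_of_not_levelClosed (h : ¬ LevelClosed s 𝓑) (h𝓑 : 𝓑 ⊆ s.powerset) :
    ∃ U v g, IsPairing g U ∧ v ∉ U ∧ U ⊆ s ∧ v ∈ s ∧ ∃ A ∈ 𝓑, setUvf U v g A ∉ 𝓑 := by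
  simp only [LevelClosed, not_forall, not_subset, mem_powersetCard] at h
  obtain ⟨A, hA, B, ⟨hBs, hBcard⟩, hB𝓑⟩ := h
  obtain ⟨U, v, g, hg, hv, hU, hvB, hAB⟩ := exists_setUvf_eq hBcard
  exact ⟨U, v, g, hg, hv, hU.trans (union_subset (mem_powerset.1 (h𝓑 hA)) hBs), hBs hvB,
    A, hA, hAB ▸ hB𝓑⟩

lemma exists_levelClosed_probInter_le {p : ℝ} (hp0 : 0 ≤ p) (hp1 : p ≤ 1)
    {𝓐 : Finset (Finset ℕ)} (h𝓐 : 𝓐 ⊆ s.powerset) :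
    ∃ 𝓑 ⊆ s.powerset, #𝓑 = #𝓐 ∧ LevelClosed s 𝓑 ∧ probInter p 𝓐 ≤ probInter p 𝓑 := by
  induction hm : missingCount s 𝓐 using Nat.strong_induction_on generalizing 𝓐 with
  | _ m ih =>
  by_cases hcl : LevelClosed s 𝓐
  · exact ⟨𝓐, h𝓐, rfl, hcl, le_rfl⟩
  obtain ⟨U, v, g, hg, hv, hU, hvs, hmoved⟩ := exists_setUvf_notMem_of_not_levelClosed hcl h𝓐
  obtain ⟨𝓑, h𝓑, hcard, hcl𝓑, hle⟩ :=
    ih _ (hm ▸ missingCount_famUvf_lt hv hg hU hvs h𝓐 hmoved)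
      (famUvf_subset_powerset hg hU hvs h𝓐) rfl
  exact ⟨𝓑, h𝓑, hcard.trans (card_famUvf hv hg), hcl𝓑,
    (probInter_le_probInter_famUvf hv hg hp0 hp1 𝓐).trans hle⟩

end LevelClosed

lemma card_atLeast (n r : ℕ) : #(atLeast n r) = ∑ j ∈ Icc r n, n.choose j := by
  have hlevel : ∀ A ∈ atLeast n r, #A ∈ Icc r n := fun A hA => by
    obtain ⟨hAn, hrA⟩ := mem_filter.1 hA
    simpa [hrA] using card_le_card (mem_powerset.1 hAn)
  rw [card_eq_sum_card_fiberwise hlevel]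
  refine sum_congr rfl fun j hj => ?_
  have : {A ∈ atLeast n r | #A = j} = powersetCard j (Icc 1 n) := by
    ext A
    simp only [atLeast, mem_filter, mem_powerset, mem_powersetCard]
    constructor
    · exact fun ⟨⟨hA, _⟩, hAj⟩ => ⟨hA, hAj⟩
    · exact fun ⟨hA, hAj⟩ => ⟨⟨hA, hAj ▸ (mem_Icc.1 hj).1⟩, hAj⟩
  rw [this, card_powersetCard, Nat.card_Icc, Nat.add_sub_cancel]

lemma eq_atLeast_of_levelClosed {n r : ℕ} {𝓑 : Finset (Finset ℕ)}
    (hcl : LevelClosed (Icc 1 n) 𝓑) (h𝓑 : 𝓑 ⊆ (Icc 1 n).powerset)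
    (hcard : #𝓑 = ∑ j ∈ Icc r n, n.choose j) : 𝓑 = atLeast n r := by
  by_cases hr : ∀ A ∈ 𝓑, r ≤ #A
  · exact eq_of_subset_of_card_le (fun A hA => mem_filter.2 ⟨h𝓑 hA, hr A hA⟩)
      (by rw [card_atLeast, hcard])
  push Not at hr
  obtain ⟨A₀, hA₀, hA₀r⟩ := hr
  have hsub : atLeast n r ⊆ 𝓑 := fun A hA => by
    obtain ⟨hA, hrA⟩ := mem_filter.1 hA
    exact hcl.powersetCard_subset hA₀ (by omega) (mem_powersetCard.2 ⟨mem_powerset.1 hA, rfl⟩)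
  have hssub : atLeast n r ⊂ 𝓑 :=
    (ssubset_iff_of_subset hsub).2 ⟨A₀, hA₀, fun hA₀' => (mem_filter.1 hA₀').2.not_gt hA₀r⟩
  have := card_lt_card hssub
  rw [card_atLeast, hcard] at this
  exact absurd this (lt_irrefl _)

theorem stmt0_general (n r : ℕ)
    (p : ℝ) (hp0 : 0 < p) (hp1 : p < 1)
    (𝓐 : Finset (Finset ℕ)) (h𝓐 : 𝓐 ⊆ (Finset.Icc 1 n).powerset)
    (hcard : 𝓐.card = ∑ j ∈ Finset.Icc r n, n.choose j) :
    probInter p 𝓐 ≤ probInter p (atLeast n r) := by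
  obtain ⟨𝓑, h𝓑, hcard𝓑, hcl, hle⟩ := exists_levelClosed_probInter_le hp0.le hp1.le h𝓐
  rwa [eq_atLeast_of_levelClosed hcl h𝓑 (hcard𝓑.trans hcard)] at hle

theorem stmt0 (n r : ℕ) (hn : 0 < n) (hr : 0 < r) (hrn : 2 * r ≤ n)
    (p : ℝ) (hp0 : 0 < p) (hp1 : p < 1)
    (𝓐 : Finset (Finset ℕ)) (h𝓐 : 𝓐 ⊆ (Finset.Icc 1 n).powerset)
    (hcard : 𝓐.card = ∑ j ∈ Finset.Icc r n, n.choose j) :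
    probInter p 𝓐 ≤ probInter p (atLeast n r) :=
  stmt0_general n r p hp0 hp1 𝓐 h𝓐 hcard
end

section
/- Let $n$, $r$ and $i$ be positive integers with $r \le n/2$ and $i \le \binom{n-1}{r}$, and let $p \in (0,1)$. Then there exists a left-compressed family $\mathcal{A} \subseteq [n]^{(r)}$ with $|\mathcal{A}| = \binom{n-1}{r-1}+i$ such that for every family $\mathcal{B} \subseteq [n]^{(r)}$ with $|\mathcal{B}| = \binom{n-1}{r-1}+i$, we have $\mathbb{P}(\mathcal{B}_p \text{ is intersecting}) \le \mathbb{P}(\mathcal{A}_p \text{ is intersecting})$. -/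
open Finset

/-!
An `ij`-compression never lowers the probability that the `p`-random subfamily is intersecting:
an intersecting `𝓓 ⊆ 𝓑` is sent to the family obtained by compressing its *forced* part (the least
part of `𝓓` that has to move for the image to lie in `C_ij 𝓑` and stay intersecting), and this map
is injective and size-preserving. Hence among the maximisers of a given size, one of least total
weight `∑_{A ∈ 𝓐} ∑_{x ∈ A} x` is fixed by every compression, since a nontrivial compression
strictly lowers the weight; that is, it is left-compressed.
-/

section SetCompress

variable {u v : ℕ} {A B : Finset ℕ}

lemma setCompress_of_mem_of_notMem (hv : v ∈ A) (hu : u ∉ A) :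
    setCompress u v A = insert u (A.erase v) :=
  if_pos ⟨hv, hu⟩

lemma setCompress_of_not (h : ¬(v ∈ A ∧ u ∉ A)) : setCompress u v A = A :=
  if_neg h

lemma mem_and_notMem_of_setCompress_ne (h : setCompress u v A ≠ A) : v ∈ A ∧ u ∉ A :=
  not_not.1 fun hA => h (setCompress_of_not hA)

lemma setCompress_eq_compress (huv : u ≠ v) : setCompress u v = UV.compress {u} {v} := by
  ext A : 1
  unfold setCompress UV.compress
  simp only [disjoint_singleton_left, singleton_subset_iff, and_comm]
  split_ifs
  · ext x
    by_cases hx : x = u <;> simp [hx, huv, and_comm]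
  · rfl

lemma mem_setCompress_of_mem {x : ℕ} (hx : x ∈ A) (hxv : x ≠ v) : x ∈ setCompress u v A := by
  unfold setCompress
  split_ifs
  · exact mem_insert_of_mem (mem_erase.2 ⟨hxv, hx⟩)
  · exact hx

lemma mem_setCompress_self (hv : v ∈ A) (hu : u ∉ A) : u ∈ setCompress u v A := by
  rw [setCompress_of_mem_of_notMem hv hu]
  exact mem_insert_self u _

lemma setCompress_injOn : Set.InjOn (setCompress u v) {A | v ∈ A ∧ u ∉ A} := by
  have recover : ∀ A : Finset ℕ, v ∈ A → u ∉ A → insert v ((setCompress u v A).erase u) = A := by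
    intro A hv hu
    rw [setCompress_of_mem_of_notMem hv hu, erase_insert fun h => hu (mem_of_mem_erase h),
      insert_erase hv]
  intro A ⟨hvA, huA⟩ B ⟨hvB, huB⟩ h
  rw [← recover A hvA huA, ← recover B hvB huB, h]

lemma disjoint_setCompress (hu : u ∉ A) (hv : v ∈ B) (huB : u ∉ B) (hAB : A ∩ B = {v}) :
    Disjoint A (setCompress u v B) := by
  rw [setCompress_of_mem_of_notMem hv huB, disjoint_insert_right]
  refine ⟨hu, disjoint_left.2 fun x hxA hx => ?_⟩
  obtain ⟨hxv, hxB⟩ := mem_erase.1 hx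
  exact hxv (mem_singleton.1 (hAB ▸ mem_inter.2 ⟨hxA, hxB⟩))

lemma card_setCompress (huv : u ≠ v) (A : Finset ℕ) : (setCompress u v A).card = A.card := by
  rw [setCompress_eq_compress huv]
  exact UV.card_compress (by simp) A

lemma setCompress_subset_insert (A : Finset ℕ) : setCompress u v A ⊆ insert u A := by
  unfold setCompress
  split_ifs
  · exact insert_subset_insert u (erase_subset v A)
  · exact subset_insert u A

lemma setCompress_mem_uniformFam {n r : ℕ} (hu : 1 ≤ u) (huv : u < v) (hvn : v ≤ n)
    (hA : A ∈ uniformFam n r) : setCompress u v A ∈ uniformFam n r := by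
  rw [uniformFam, mem_powersetCard] at hA ⊢
  refine ⟨(setCompress_subset_insert A).trans (insert_subset ?_ hA.1),
    (card_setCompress huv.ne A).trans hA.2⟩
  exact mem_Icc.2 ⟨hu, by omega⟩

lemma sum_setCompress_lt (huv : u < v) (hv : v ∈ A) (hu : u ∉ A) :
    ∑ x ∈ setCompress u v A, x < ∑ x ∈ A, x := by
  rw [setCompress_of_mem_of_notMem hv hu, sum_insert fun h => hu (mem_of_mem_erase h),
    ← sum_erase_add A _ hv]
  omega

end SetCompress

section FamCompress

variable {u v : ℕ} {𝓑 : Finset (Finset ℕ)}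

lemma famCompress_eq_compression (huv : u ≠ v) : famCompress u v 𝓑 = UV.compression {u} {v} 𝓑 := by
  ext X
  rw [famCompress, setCompress_eq_compress huv, UV.mem_compression, mem_union, mem_image,
    mem_filter]
  constructor
  · rintro (⟨A, hA, rfl⟩ | hX)
    · by_cases hX : UV.compress {u} {v} A ∈ 𝓑
      · exact Or.inl ⟨hX, by rwa [UV.compress_idem]⟩
      · exact Or.inr ⟨hX, A, hA, rfl⟩
    · exact Or.inl hX
  · rintro (hX | ⟨-, hX⟩)
    · exact Or.inr hX
    · exact Or.inl hX

lemma card_famCompress (huv : u ≠ v) : (famCompress u v 𝓑).card = 𝓑.card := by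
  rw [famCompress_eq_compression huv, UV.card_compression]

lemma famCompress_subset_uniformFam {n r : ℕ} (hu : 1 ≤ u) (huv : u < v) (hvn : v ≤ n)
    (h𝓑 : 𝓑 ⊆ uniformFam n r) : famCompress u v 𝓑 ⊆ uniformFam n r := by
  intro X hX
  rcases mem_union.1 hX with hX | hX
  · obtain ⟨A, hA, rfl⟩ := mem_image.1 hX
    exact setCompress_mem_uniformFam hu huv hvn (h𝓑 hA)
  · exact h𝓑 (mem_filter.1 hX).1

def famWeight (𝓐 : Finset (Finset ℕ)) : ℕ :=
  ∑ A ∈ 𝓐, ∑ x ∈ A, x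

lemma famWeight_famCompress_lt (huv : u < v) (hne : famCompress u v 𝓑 ≠ 𝓑) :
    famWeight (famCompress u v 𝓑) < famWeight 𝓑 := by
  have hdecomp : famCompress u v 𝓑 = {A ∈ 𝓑 | setCompress u v A ∈ 𝓑} ∪
      {A ∈ 𝓑 | setCompress u v A ∉ 𝓑}.image (setCompress u v) := by
    rw [famCompress_eq_compression huv.ne, UV.compression, filter_image,
      setCompress_eq_compress huv.ne]
  have hmoved : {A ∈ 𝓑 | setCompress u v A ∉ 𝓑}.Nonempty := by
    refine nonempty_iff_ne_empty.2 fun hempty => hne ?_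
    rw [hdecomp, hempty, image_empty, union_empty, filter_eq_self]
    exact fun A hA => not_not.1 (filter_eq_empty_iff.1 hempty hA)
  have hmoves : ∀ A ∈ 𝓑, setCompress u v A ∉ 𝓑 → v ∈ A ∧ u ∉ A := fun A hA hCA =>
    mem_and_notMem_of_setCompress_ne fun h => hCA (by rwa [h])
  have hlt : ∑ A ∈ 𝓑 with setCompress u v A ∉ 𝓑, ∑ x ∈ setCompress u v A, x <
      ∑ A ∈ 𝓑 with setCompress u v A ∉ 𝓑, ∑ x ∈ A, x := by
    refine sum_lt_sum_of_nonempty hmoved fun A hA => ?_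
    obtain ⟨hvA, huA⟩ := hmoves A (mem_filter.1 hA).1 (mem_filter.1 hA).2
    exact sum_setCompress_lt huv hvA huA
  have hdisj : Disjoint {A ∈ 𝓑 | setCompress u v A ∈ 𝓑}
      ({A ∈ 𝓑 | setCompress u v A ∉ 𝓑}.image (setCompress u v)) := by
    refine disjoint_left.2 fun X hX hX' => ?_
    obtain ⟨A, hA, rfl⟩ := mem_image.1 hX'
    exact (mem_filter.1 hA).2 (mem_filter.1 hX).1
  have hinj : Set.InjOn (setCompress u v) ↑({A ∈ 𝓑 | setCompress u v A ∉ 𝓑} : Finset _) :=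
    setCompress_injOn.mono fun A hA => by
      obtain ⟨hA, hCA⟩ := mem_filter.1 (mem_coe.1 hA)
      exact hmoves A hA hCA
  rw [famWeight, famWeight, hdecomp, sum_union hdisj, sum_image hinj,
    ← sum_filter_add_sum_filter_not 𝓑 (fun A => setCompress u v A ∈ 𝓑)]
  omega

end FamCompress

section Forced

variable (u v : ℕ) (𝓑 𝓓 : Finset (Finset ℕ))

/-- The rules defining the forced part of an intersecting `𝓓 ⊆ 𝓑`: a set of `𝓓` must be
compressed if its compression is absent from `𝓑` (it is gone from `famCompress u v 𝓑`), or if it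
meets a set that must be compressed only in `v` (left alone, it would miss that compression). -/
def IsForcingClosed (R : Finset (Finset ℕ)) : Prop :=
  (∀ A ∈ 𝓓, v ∈ A → u ∉ A → setCompress u v A ∉ 𝓑 → A ∈ R) ∧
  ∀ C ∈ 𝓓, v ∈ C → u ∉ C → (∃ A ∈ R, A ∩ C = {v}) → C ∈ R

open Classical in
noncomputable def forcedPart : Finset (Finset ℕ) :=
  {B ∈ 𝓓 | ∀ R ⊆ 𝓓, IsForcingClosed u v 𝓑 𝓓 R → B ∈ R}

noncomputable def compressForced : Finset (Finset ℕ) :=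
  (𝓓 \ forcedPart u v 𝓑 𝓓) ∪ (forcedPart u v 𝓑 𝓓).image (setCompress u v)

variable {u v 𝓑 𝓓}

open Classical in
lemma mem_forcedPart {B : Finset ℕ} :
    B ∈ forcedPart u v 𝓑 𝓓 ↔ B ∈ 𝓓 ∧ ∀ R ⊆ 𝓓, IsForcingClosed u v 𝓑 𝓓 R → B ∈ R :=
  mem_filter

lemma forcedPart_subset : forcedPart u v 𝓑 𝓓 ⊆ 𝓓 :=
  fun _ hB => (mem_forcedPart.1 hB).1

lemma forcedPart_subset_of_isForcingClosed {R : Finset (Finset ℕ)} (hR𝓓 : R ⊆ 𝓓)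
    (hR : IsForcingClosed u v 𝓑 𝓓 R) : forcedPart u v 𝓑 𝓓 ⊆ R :=
  fun _ hB => (mem_forcedPart.1 hB).2 R hR𝓓 hR

lemma isForcingClosed_forcedPart : IsForcingClosed u v 𝓑 𝓓 (forcedPart u v 𝓑 𝓓) := by
  refine ⟨fun A hA hvA huA hCA => ?_, fun C hC hvC huC ⟨A, hA, hAC⟩ => ?_⟩
  · exact mem_forcedPart.2 ⟨hA, fun R _ hR => hR.1 A hA hvA huA hCA⟩
  · exact mem_forcedPart.2 ⟨hC, fun R hR𝓓 hR =>
      hR.2 C hC hvC huC ⟨A, forcedPart_subset_of_isForcingClosed hR𝓓 hR hA, hAC⟩⟩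

lemma mem_and_notMem_of_mem_forcedPart {B : Finset ℕ} (hB : B ∈ forcedPart u v 𝓑 𝓓) :
    v ∈ B ∧ u ∉ B := by
  have hclosed : IsForcingClosed u v 𝓑 𝓓 {B ∈ 𝓓 | v ∈ B ∧ u ∉ B} :=
    ⟨fun A hA hvA huA _ => mem_filter.2 ⟨hA, hvA, huA⟩,
      fun C hC hvC huC _ => mem_filter.2 ⟨hC, hvC, huC⟩⟩
  exact (mem_filter.1 (forcedPart_subset_of_isForcingClosed (filter_subset _ _) hclosed hB)).2

lemma setCompress_notMem_of_mem_forcedPart (h𝓓 : 𝓓 ⊆ 𝓑) (hint : IsIntersecting 𝓓)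
    {B : Finset ℕ} (hB : B ∈ forcedPart u v 𝓑 𝓓) : setCompress u v B ∉ 𝓓 := by
  have hclosed : IsForcingClosed u v 𝓑 𝓓 {B ∈ 𝓓 | v ∈ B ∧ u ∉ B ∧ setCompress u v B ∉ 𝓓} := by
    refine ⟨fun A hA hvA huA hCA => mem_filter.2 ⟨hA, hvA, huA, fun h => hCA (h𝓓 h)⟩,
      fun C hC hvC huC ⟨A, hA, hAC⟩ => mem_filter.2 ⟨hC, hvC, huC, fun hCC => ?_⟩⟩
    obtain ⟨hA𝓓, -, huA, -⟩ := mem_filter.1 hA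
    exact not_disjoint_iff_nonempty_inter.2 (hint A hA𝓓 _ hCC)
      (disjoint_setCompress huA hvC huC hAC)
  exact (mem_filter.1 (forcedPart_subset_of_isForcingClosed (filter_subset _ _) hclosed hB)).2.2.2

end Forced

section CompressForced

variable {u v : ℕ} {𝓑 𝓓 : Finset (Finset ℕ)}

lemma compressForced_subset_famCompress (h𝓓 : 𝓓 ⊆ 𝓑) :
    compressForced u v 𝓑 𝓓 ⊆ famCompress u v 𝓑 := by
  intro X hX
  rcases mem_union.1 hX with hX | hX
  · obtain ⟨hX𝓓, hXQ⟩ := mem_sdiff.1 hX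
    refine mem_union_right _ (mem_filter.2 ⟨h𝓓 hX𝓓, ?_⟩)
    by_contra hCX
    obtain ⟨hvX, huX⟩ := mem_and_notMem_of_setCompress_ne fun h => hCX (h ▸ h𝓓 hX𝓓)
    exact hXQ (isForcingClosed_forcedPart.1 X hX𝓓 hvX huX hCX)
  · obtain ⟨B, hB, rfl⟩ := mem_image.1 hX
    exact mem_union_left _ (mem_image_of_mem _ (h𝓓 (forcedPart_subset hB)))

lemma disjoint_sdiff_forcedPart_image (h𝓓 : 𝓓 ⊆ 𝓑) (hint : IsIntersecting 𝓓) :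
    Disjoint (𝓓 \ forcedPart u v 𝓑 𝓓) ((forcedPart u v 𝓑 𝓓).image (setCompress u v)) := by
  refine disjoint_left.2 fun X hX hX' => ?_
  obtain ⟨B, hB, rfl⟩ := mem_image.1 hX'
  exact setCompress_notMem_of_mem_forcedPart h𝓓 hint hB (mem_sdiff.1 hX).1

lemma card_compressForced (h𝓓 : 𝓓 ⊆ 𝓑) (hint : IsIntersecting 𝓓) :
    (compressForced u v 𝓑 𝓓).card = 𝓓.card := by
  have hinj : Set.InjOn (setCompress u v) ↑(forcedPart u v 𝓑 𝓓) :=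
    setCompress_injOn.mono fun _ hB => mem_and_notMem_of_mem_forcedPart hB
  rw [compressForced, card_union_of_disjoint (disjoint_sdiff_forcedPart_image h𝓓 hint),
    card_image_of_injOn hinj, card_sdiff_add_card_eq_card forcedPart_subset]

lemma inter_setCompress_nonempty_of_mem_forcedPart (hint : IsIntersecting 𝓓) {X B : Finset ℕ}
    (hX : X ∈ 𝓓) (hXQ : X ∉ forcedPart u v 𝓑 𝓓) (hB : B ∈ forcedPart u v 𝓑 𝓓) :
    (X ∩ setCompress u v B).Nonempty := by
  obtain ⟨hvB, huB⟩ := mem_and_notMem_of_mem_forcedPart hB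
  by_contra hempty
  have hv : ∀ x ∈ B ∩ X, x = v := fun x hx => by_contra fun hxv =>
    hempty ⟨x, mem_inter.2 ⟨(mem_inter.1 hx).2, mem_setCompress_of_mem (mem_inter.1 hx).1 hxv⟩⟩
  obtain ⟨y, hy⟩ := hint B (forcedPart_subset hB) X hX
  have hBX : B ∩ X = {v} := eq_singleton_iff_unique_mem.2 ⟨hv y hy ▸ hy, hv⟩
  have huX : u ∉ X := fun huX =>
    hempty ⟨u, mem_inter.2 ⟨huX, mem_setCompress_self hvB huB⟩⟩
  have hvX : v ∈ X := mem_of_mem_inter_right (hBX ▸ mem_singleton_self v)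
  exact hXQ (isForcingClosed_forcedPart.2 X hX hvX huX ⟨B, hB, hBX⟩)

lemma isIntersecting_compressForced (hint : IsIntersecting 𝓓) :
    IsIntersecting (compressForced u v 𝓑 𝓓) := by
  intro X hX Y hY
  rcases mem_union.1 hX with hX | hX <;> rcases mem_union.1 hY with hY | hY
  · exact hint X (mem_sdiff.1 hX).1 Y (mem_sdiff.1 hY).1
  · obtain ⟨B, hB, rfl⟩ := mem_image.1 hY
    exact inter_setCompress_nonempty_of_mem_forcedPart hint (mem_sdiff.1 hX).1 (mem_sdiff.1 hX).2 hB
  · obtain ⟨A, hA, rfl⟩ := mem_image.1 hX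
    rw [inter_comm]
    exact inter_setCompress_nonempty_of_mem_forcedPart hint (mem_sdiff.1 hY).1 (mem_sdiff.1 hY).2 hA
  · obtain ⟨A, hA, rfl⟩ := mem_image.1 hX
    obtain ⟨B, hB, rfl⟩ := mem_image.1 hY
    obtain ⟨hvA, huA⟩ := mem_and_notMem_of_mem_forcedPart hA
    obtain ⟨hvB, huB⟩ := mem_and_notMem_of_mem_forcedPart hB
    exact ⟨u, mem_inter.2 ⟨mem_setCompress_self hvA huA, mem_setCompress_self hvB huB⟩⟩

lemma forcedPart_subset_of_compressForced_eq {𝓓' : Finset (Finset ℕ)} (h𝓓' : 𝓓' ⊆ 𝓑)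
    (hint' : IsIntersecting 𝓓') (h : compressForced u v 𝓑 𝓓 = compressForced u v 𝓑 𝓓') :
    forcedPart u v 𝓑 𝓓 ⊆ forcedPart u v 𝓑 𝓓' := by
  have decode : ∀ B ∈ forcedPart u v 𝓑 𝓓,
      B ∈ forcedPart u v 𝓑 𝓓' ∨ setCompress u v B ∈ 𝓓' := by
    intro B hB
    have hCB : setCompress u v B ∈ compressForced u v 𝓑 𝓓' :=
      h ▸ mem_union_right _ (mem_image_of_mem _ hB)
    rcases mem_union.1 hCB with hCB | hCB
    · exact Or.inr (mem_sdiff.1 hCB).1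
    · obtain ⟨B', hB', hB'B⟩ := mem_image.1 hCB
      have := setCompress_injOn (mem_and_notMem_of_mem_forcedPart hB')
        (mem_and_notMem_of_mem_forcedPart hB) hB'B
      exact Or.inl (this ▸ hB')
  have hclosed : IsForcingClosed u v 𝓑 𝓓 {B ∈ forcedPart u v 𝓑 𝓓 | B ∈ forcedPart u v 𝓑 𝓓'} := by
    refine ⟨fun A hA hvA huA hCA => ?_, fun C hC hvC huC ⟨A, hA, hAC⟩ => ?_⟩
    · have hAQ := isForcingClosed_forcedPart.1 A hA hvA huA hCA
      refine mem_filter.2 ⟨hAQ, (decode A hAQ).resolve_right fun hCA' => hCA (h𝓓' hCA')⟩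
    · obtain ⟨hAQ, hAQ'⟩ := mem_filter.1 hA
      have hCQ := isForcingClosed_forcedPart.2 C hC hvC huC ⟨A, hAQ, hAC⟩
      refine mem_filter.2 ⟨hCQ, (decode C hCQ).resolve_right fun hCC => ?_⟩
      exact not_disjoint_iff_nonempty_inter.2 (hint' A (forcedPart_subset hAQ') _ hCC)
        (disjoint_setCompress (mem_and_notMem_of_mem_forcedPart hAQ).2 hvC huC hAC)
  have hR𝓓 : {B ∈ forcedPart u v 𝓑 𝓓 | B ∈ forcedPart u v 𝓑 𝓓'} ⊆ 𝓓 :=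
    (filter_subset _ _).trans forcedPart_subset
  exact fun B hB => (mem_filter.1 (forcedPart_subset_of_isForcingClosed hR𝓓 hclosed hB)).2

lemma forcedPart_union_compressForced_sdiff (h𝓓 : 𝓓 ⊆ 𝓑) (hint : IsIntersecting 𝓓) :
    forcedPart u v 𝓑 𝓓 ∪
      (compressForced u v 𝓑 𝓓 \ (forcedPart u v 𝓑 𝓓).image (setCompress u v)) = 𝓓 := by
  rw [compressForced, union_sdiff_right,
    sdiff_eq_self_of_disjoint (disjoint_sdiff_forcedPart_image h𝓓 hint),
    union_sdiff_of_subset forcedPart_subset]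

lemma compressForced_injOn :
    Set.InjOn (compressForced u v 𝓑) {𝓓 | 𝓓 ⊆ 𝓑 ∧ IsIntersecting 𝓓} := by
  intro 𝓓 ⟨h𝓓, hint⟩ 𝓓' ⟨h𝓓', hint'⟩ h
  have hQ : forcedPart u v 𝓑 𝓓 = forcedPart u v 𝓑 𝓓' :=
    (forcedPart_subset_of_compressForced_eq h𝓓' hint' h).antisymm
      (forcedPart_subset_of_compressForced_eq h𝓓 hint h.symm)
  rw [← forcedPart_union_compressForced_sdiff h𝓓 hint,
    ← forcedPart_union_compressForced_sdiff h𝓓' hint', hQ, h]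

end CompressForced

lemma probInter_le_of_injOn {𝓑 𝓑' : Finset (Finset ℕ)} {p : ℝ} (hp0 : 0 ≤ p) (hp1 : p ≤ 1)
    (hcard : 𝓑.card = 𝓑'.card) (f : Finset (Finset ℕ) → Finset (Finset ℕ))
    (hmaps : Set.MapsTo f {𝓓 | 𝓓 ⊆ 𝓑 ∧ IsIntersecting 𝓓} {𝓔 | 𝓔 ⊆ 𝓑' ∧ IsIntersecting 𝓔})
    (hinj : Set.InjOn f {𝓓 | 𝓓 ⊆ 𝓑 ∧ IsIntersecting 𝓓})
    (hfcard : ∀ 𝓓 ⊆ 𝓑, IsIntersecting 𝓓 → (f 𝓓).card = 𝓓.card) :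
    probInter p 𝓑 ≤ probInter p 𝓑' := by
  have hcoe : ∀ 𝓐 : Finset (Finset ℕ),
      ((𝓐.powerset.filter IsIntersecting : Finset _) : Set (Finset (Finset ℕ))) =
        {𝓓 | 𝓓 ⊆ 𝓐 ∧ IsIntersecting 𝓓} := fun 𝓐 => by ext; simp
  let weight : Finset (Finset ℕ) → ℝ := fun 𝓔 => p ^ 𝓔.card * (1 - p) ^ (𝓑'.card - 𝓔.card)
  calc probInter p 𝓑 = ∑ 𝓓 ∈ 𝓑.powerset.filter IsIntersecting, weight (f 𝓓) := by
        rw [probInter, hcard]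
        refine sum_congr rfl fun 𝓓 h𝓓 => ?_
        obtain ⟨h𝓓, hint⟩ := mem_filter.1 h𝓓
        simp only [weight, hfcard 𝓓 (mem_powerset.1 h𝓓) hint]
    _ = ∑ 𝓔 ∈ (𝓑.powerset.filter IsIntersecting).image f, weight 𝓔 :=
        (sum_image (by rw [hcoe]; exact hinj)).symm
    _ ≤ probInter p 𝓑' := by
        refine sum_le_sum_of_subset_of_nonneg ?_ fun 𝓔 _ _ => by positivity
        rw [← coe_subset, coe_image, hcoe, hcoe]
        exact hmaps.image_subset

lemma probInter_le_probInter_famCompress {u v : ℕ} (huv : u ≠ v) {𝓑 : Finset (Finset ℕ)} {p : ℝ}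
    (hp0 : 0 ≤ p) (hp1 : p ≤ 1) : probInter p 𝓑 ≤ probInter p (famCompress u v 𝓑) :=
  probInter_le_of_injOn hp0 hp1 (card_famCompress huv).symm (compressForced u v 𝓑)
    (fun _ ⟨h𝓓, hint⟩ =>
      ⟨compressForced_subset_famCompress h𝓓, isIntersecting_compressForced hint⟩)
    compressForced_injOn (fun _ h𝓓 hint => card_compressForced h𝓓 hint)

lemma card_uniformFam (n r : ℕ) : (uniformFam n r).card = n.choose r := by
  rw [uniformFam, card_powersetCard, Nat.card_Icc, Nat.add_sub_cancel]

theorem exists_leftCompressed_forall_probInter_le {n r k : ℕ} (hk : k ≤ (uniformFam n r).card)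
    {p : ℝ} (hp0 : 0 ≤ p) (hp1 : p ≤ 1) :
    ∃ 𝓐 ⊆ uniformFam n r, LeftCompressed n 𝓐 ∧ 𝓐.card = k ∧
      ∀ 𝓑 ⊆ uniformFam n r, 𝓑.card = k → probInter p 𝓑 ≤ probInter p 𝓐 := by
  obtain ⟨𝓜, h𝓜, h𝓜max⟩ :=
    ((uniformFam n r).powersetCard k).exists_max_image (probInter p) (powersetCard_nonempty.2 hk)
  set maximizers := {𝓑 ∈ (uniformFam n r).powersetCard k | probInter p 𝓜 ≤ probInter p 𝓑}
  obtain ⟨𝓐, h𝓐, h𝓐min⟩ :=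
    maximizers.exists_min_image famWeight ⟨𝓜, mem_filter.2 ⟨h𝓜, le_rfl⟩⟩
  obtain ⟨h𝓐k, h𝓐max⟩ := mem_filter.1 h𝓐
  obtain ⟨h𝓐sub, h𝓐card⟩ := mem_powersetCard.1 h𝓐k
  refine ⟨𝓐, h𝓐sub, fun a b ha hab hbn => ?_, h𝓐card, fun 𝓑 h𝓑 h𝓑card =>
    (h𝓜max 𝓑 (mem_powersetCard.2 ⟨h𝓑, h𝓑card⟩)).trans h𝓐max⟩
  by_contra hne
  have hmax : famCompress a b 𝓐 ∈ maximizers := mem_filter.2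
    ⟨mem_powersetCard.2 ⟨famCompress_subset_uniformFam ha hab hbn h𝓐sub,
      (card_famCompress hab.ne).trans h𝓐card⟩,
      h𝓐max.trans (probInter_le_probInter_famCompress hab.ne hp0 hp1)⟩
  exact (h𝓐min _ hmax).not_gt (famWeight_famCompress_lt hab hne)

theorem stmt2_general (n r i : ℕ) (hn : 0 < n) (hr : 0 < r)
    (hi2 : i ≤ (n - 1).choose r)
    (p : ℝ) (hp0 : 0 < p) (hp1 : p < 1) :
    ∃ 𝓐 : Finset (Finset ℕ),
      𝓐 ⊆ uniformFam n r ∧ LeftCompressed n 𝓐 ∧ 𝓐.card = (n - 1).choose (r - 1) + i ∧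
      ∀ 𝓑 : Finset (Finset ℕ), 𝓑 ⊆ uniformFam n r →
        𝓑.card = (n - 1).choose (r - 1) + i → probInter p 𝓑 ≤ probInter p 𝓐 := by
  have hk : (n - 1).choose (r - 1) + i ≤ (uniformFam n r).card := by
    rw [card_uniformFam, Nat.choose_eq_choose_pred_add hn hr]
    omega
  exact exists_leftCompressed_forall_probInter_le hk hp0.le hp1.le

theorem stmt2 (n r i : ℕ) (hn : 0 < n) (hr : 0 < r) (hi : 0 < i) (hrn : 2 * r ≤ n)
    (hi2 : i ≤ (n - 1).choose r)
    (p : ℝ) (hp0 : 0 < p) (hp1 : p < 1) :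
    ∃ 𝓐 : Finset (Finset ℕ),
      𝓐 ⊆ uniformFam n r ∧ LeftCompressed n 𝓐 ∧ 𝓐.card = (n - 1).choose (r - 1) + i ∧
      ∀ 𝓑 : Finset (Finset ℕ), 𝓑 ⊆ uniformFam n r →
        𝓑.card = (n - 1).choose (r - 1) + i → probInter p 𝓑 ≤ probInter p 𝓐 :=
  stmt2_general n r i hn hr hi2 p hp0 hp1
end

section
/- Let $\mathcal{A} \subseteq \mathcal{P}[n]$ be intersecting, let $U \subseteq [n]$ have even order, let $v \in [n] - U$, and let $f : U \to U$ be a pairing function. Then $\mathcal{C}_{U,v,f}\mathcal{A}$ is intersecting. -/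
open Finset

/-! Two members of the compressed family that both contain `v` meet at `v`. If `v ∉ X`, then
`X` survived the compression, so both `X` and `C(X)` lie in `𝓐`, while any other member `Y` is
either in `𝓐` or of the form `C(B)` with `B ∈ 𝓐`, `v ∉ B`. In the latter case a common point `w`
of `C(X)` and `B` gives a common point of `X` and `C(B)`: `f w` if `w ∈ U` (as `f` is an
involution of `U`), and `w` itself otherwise. -/

namespace Uvf

variable {U : Finset ℕ} {v : ℕ} {f : ℕ → ℕ} {𝓐 : Finset (Finset ℕ)} {X : Finset ℕ}

lemma self_mem_setUvf (A : Finset ℕ) : v ∈ setUvf U v f A := by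
  unfold setUvf
  split_ifs with hvA
  · exact hvA
  · simp

lemma setUvf_of_mem {A : Finset ℕ} (hvA : v ∈ A) : setUvf U v f A = A := if_pos hvA

lemma mem_and_setUvf_mem_of_notMem (hX : X ∈ famUvf U v f 𝓐) (hvX : v ∉ X) :
    X ∈ 𝓐 ∧ setUvf U v f X ∈ 𝓐 := by
  rcases mem_union.mp hX with hX | hX
  · obtain ⟨A, -, rfl⟩ := mem_image.mp hX
    exact absurd (self_mem_setUvf A) hvX
  · exact mem_filter.mp hX

lemma mem_or_eq_setUvf (hX : X ∈ famUvf U v f 𝓐) :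
    X ∈ 𝓐 ∨ ∃ B ∈ 𝓐, v ∉ B ∧ X = setUvf U v f B := by
  rcases mem_union.mp hX with hX | hX
  · obtain ⟨A, hA, rfl⟩ := mem_image.mp hX
    by_cases hvA : v ∈ A
    · exact .inl (by rwa [setUvf_of_mem hvA])
    · exact .inr ⟨A, hA, hvA, rfl⟩
  · exact .inl (mem_filter.mp hX).1

lemma inter_setUvf_nonempty (hmaps : ∀ x ∈ U, f x ∈ U) (hinv : ∀ x ∈ U, f (f x) = x)
    {A B : Finset ℕ} (hvA : v ∉ A) (hvB : v ∉ B) (h : (setUvf U v f A ∩ B).Nonempty) :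
    (A ∩ setUvf U v f B).Nonempty := by
  obtain ⟨w, hw⟩ := h
  obtain ⟨hwA, hwB⟩ := mem_inter.mp hw
  rw [setUvf, if_neg hvA] at hwA
  rw [setUvf, if_neg hvB]
  simp only [mem_union, mem_image, mem_singleton, mem_inter, mem_sdiff] at hwA
  rcases hwA with (⟨x, ⟨hxA, hxU⟩, rfl⟩ | rfl) | ⟨hwA, hwU⟩
  · refine ⟨x, mem_inter.mpr ⟨hxA, ?_⟩⟩
    simp only [mem_union, mem_image, mem_inter]
    exact .inl (.inl ⟨f x, ⟨hwB, hmaps x hxU⟩, hinv x hxU⟩)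
  · exact absurd hwB hvB
  · exact ⟨w, mem_inter.mpr ⟨hwA, mem_union_right _ (mem_sdiff.mpr ⟨hwB, hwU⟩)⟩⟩

lemma inter_nonempty_of_notMem (hint : IsIntersecting 𝓐) (hmaps : ∀ x ∈ U, f x ∈ U)
    (hinv : ∀ x ∈ U, f (f x) = x) {Y : Finset ℕ} (hX : X ∈ famUvf U v f 𝓐)
    (hY : Y ∈ famUvf U v f 𝓐) (hvX : v ∉ X) : (X ∩ Y).Nonempty := by
  obtain ⟨hX𝓐, hCX⟩ := mem_and_setUvf_mem_of_notMem hX hvX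
  rcases mem_or_eq_setUvf hY with hY𝓐 | ⟨B, hB, hvB, rfl⟩
  · exact hint X hX𝓐 Y hY𝓐
  · exact inter_setUvf_nonempty hmaps hinv hvX hvB (hint _ hCX B hB)

end Uvf

theorem stmt6_general (𝓐 : Finset (Finset ℕ))
    (hint : IsIntersecting 𝓐)
    (U : Finset ℕ)
    (v : ℕ)
    (f : ℕ → ℕ) (hf : IsPairing f U) :
    IsIntersecting (famUvf U v f 𝓐) := by
  obtain ⟨hmaps, hinv, -⟩ := hf
  intro A hA B hB
  by_cases hvA : v ∈ A
  · by_cases hvB : v ∈ B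
    · exact ⟨v, mem_inter.mpr ⟨hvA, hvB⟩⟩
    · rw [inter_comm]
      exact Uvf.inter_nonempty_of_notMem hint hmaps hinv hB hA hvB
  · exact Uvf.inter_nonempty_of_notMem hint hmaps hinv hA hB hvA

theorem stmt6 (n : ℕ) (𝓐 : Finset (Finset ℕ)) (h𝓐 : 𝓐 ⊆ (Finset.Icc 1 n).powerset)
    (hint : IsIntersecting 𝓐)
    (U : Finset ℕ) (hU : U ⊆ Finset.Icc 1 n) (hUeven : Even U.card)
    (v : ℕ) (hv : v ∈ Finset.Icc 1 n) (hvU : v ∉ U)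
    (f : ℕ → ℕ) (hf : IsPairing f U) :
    IsIntersecting (famUvf U v f 𝓐) :=
  stmt6_general 𝓐 hint U v f hf
end
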